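/- arXiv:1606.08950 — 3 statements merged into one kernel-verified Lean document; each statement's English description precedes it below -/
import Mathlib

section
/- Let M be a positive integer, Φ > 0 a real number, and let w and w̃ be nonzero vectors in ℂ^M. Then log(1 − e^{−Φ‖w‖²}) ≤ Φ·e^{−Φ‖w̃‖²}·‖w‖²/(1 − e^{−Φ‖w̃‖²}) + φ(w̃), where φ(w̃) = −Φ·e^{−Φ‖w̃‖²}·‖w̃‖²/(1 − e^{−Φ‖w̃‖²}) + log(1 − e^{−Φ‖w̃‖²}); equality holds if and only if ‖w‖ = ‖w̃‖. (This is the convex upper bound (26) of the paper.) -/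
/-!
The function `f x = log (1 - e^{-x})` is strictly concave on `(0, ∞)` with
`f' y = e^{-y} / (1 - e^{-y})`, and the right-hand side is its tangent line at `y = Φ‖w̃‖²`
evaluated at `x = Φ‖w‖²`. The tangent-line bound follows from `log t ≤ t - 1` applied to
`(1 - e^{-x}) / (1 - e^{-y})` together with `1 + t ≤ e^t` applied to `t = y - x`; the first is
strict unless `x = y`.
-/

open Real

lemma log_one_sub_sub_log_one_sub_lt {a b : ℝ} (ha : a < 1) (hb : b < 1) (hab : a ≠ b) :
    log (1 - a) - log (1 - b) < (b - a) / (1 - b) := by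
  have hb' : 0 < 1 - b := by linarith
  have hratio : (1 - a) / (1 - b) ≠ 1 := by
    rw [Ne, div_eq_one_iff_eq hb'.ne']
    exact fun h => hab (by linarith)
  calc log (1 - a) - log (1 - b) = log ((1 - a) / (1 - b)) := (log_div (by linarith) hb'.ne').symm
    _ < (1 - a) / (1 - b) - 1 := log_lt_sub_one_of_pos (div_pos (by linarith) hb') hratio
    _ = (b - a) / (1 - b) := by field_simp; ring

lemma exp_neg_sub_exp_neg_le (x y : ℝ) : exp (-y) - exp (-x) ≤ exp (-y) * (x - y) := by
  have h : exp (-y) * (y - x + 1) ≤ exp (-x) := by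
    calc exp (-y) * (y - x + 1) ≤ exp (-y) * exp (y - x) :=
          mul_le_mul_of_nonneg_left (add_one_le_exp _) (exp_pos _).le
      _ = exp (-x) := by rw [← exp_add]; ring_nf
  linarith

theorem log_one_sub_exp_neg_le_tangent {x y : ℝ} (hx : 0 < x) (hy : 0 < y) :
    log (1 - exp (-x)) ≤ exp (-y) / (1 - exp (-y)) * (x - y) + log (1 - exp (-y)) ∧
      (log (1 - exp (-x)) = exp (-y) / (1 - exp (-y)) * (x - y) + log (1 - exp (-y)) ↔
        x = y) := by
  rcases eq_or_ne x y with rfl | hxy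
  · simp
  have hexp_lt_one : ∀ {t : ℝ}, 0 < t → exp (-t) < 1 := fun ht => exp_lt_one_iff.mpr (by linarith)
  have hb' : 0 < 1 - exp (-y) := by linarith [hexp_lt_one hy]
  have hstrict : log (1 - exp (-x)) < exp (-y) / (1 - exp (-y)) * (x - y) + log (1 - exp (-y)) :=
    calc log (1 - exp (-x)) < (exp (-y) - exp (-x)) / (1 - exp (-y)) + log (1 - exp (-y)) := by
          have := log_one_sub_sub_log_one_sub_lt (hexp_lt_one hx) (hexp_lt_one hy)
            (fun h => hxy (neg_injective (exp_injective h)))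
          linarith
      _ ≤ exp (-y) * (x - y) / (1 - exp (-y)) + log (1 - exp (-y)) := by
          gcongr; exact exp_neg_sub_exp_neg_le x y
      _ = exp (-y) / (1 - exp (-y)) * (x - y) + log (1 - exp (-y)) := by ring
  exact ⟨hstrict.le, iff_of_false hstrict.ne hxy⟩

theorem stmt_7_general (M : ℕ) (Φ : ℝ) (hΦ : 0 < Φ)
    (w wt : EuclideanSpace ℂ (Fin M)) (hw : w ≠ 0) (hwt : wt ≠ 0) :
    Real.log (1 - Real.exp (-(Φ * ‖w‖ ^ 2))) ≤
        Φ * Real.exp (-(Φ * ‖wt‖ ^ 2)) * ‖w‖ ^ 2 / (1 - Real.exp (-(Φ * ‖wt‖ ^ 2))) +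
          (-(Φ * Real.exp (-(Φ * ‖wt‖ ^ 2)) * ‖wt‖ ^ 2 / (1 - Real.exp (-(Φ * ‖wt‖ ^ 2)))) +
            Real.log (1 - Real.exp (-(Φ * ‖wt‖ ^ 2)))) ∧
      (Real.log (1 - Real.exp (-(Φ * ‖w‖ ^ 2))) =
          Φ * Real.exp (-(Φ * ‖wt‖ ^ 2)) * ‖w‖ ^ 2 / (1 - Real.exp (-(Φ * ‖wt‖ ^ 2))) +
            (-(Φ * Real.exp (-(Φ * ‖wt‖ ^ 2)) * ‖wt‖ ^ 2 / (1 - Real.exp (-(Φ * ‖wt‖ ^ 2)))) +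
              Real.log (1 - Real.exp (-(Φ * ‖wt‖ ^ 2)))) ↔ ‖w‖ = ‖wt‖) := by
  have hx : 0 < Φ * ‖w‖ ^ 2 := by have := norm_pos_iff.mpr hw; positivity
  have hy : 0 < Φ * ‖wt‖ ^ 2 := by have := norm_pos_iff.mpr hwt; positivity
  have hrhs : ∀ s : ℝ, Φ * exp (-(Φ * ‖wt‖ ^ 2)) * s / (1 - exp (-(Φ * ‖wt‖ ^ 2))) +
      (-(Φ * exp (-(Φ * ‖wt‖ ^ 2)) * ‖wt‖ ^ 2 / (1 - exp (-(Φ * ‖wt‖ ^ 2)))) +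
        log (1 - exp (-(Φ * ‖wt‖ ^ 2)))) =
      exp (-(Φ * ‖wt‖ ^ 2)) / (1 - exp (-(Φ * ‖wt‖ ^ 2))) * (Φ * s - Φ * ‖wt‖ ^ 2) +
        log (1 - exp (-(Φ * ‖wt‖ ^ 2))) := fun s => by ring
  have hnorm : Φ * ‖w‖ ^ 2 = Φ * ‖wt‖ ^ 2 ↔ ‖w‖ = ‖wt‖ := by
    rw [mul_right_inj' hΦ.ne', pow_left_inj₀ (norm_nonneg _) (norm_nonneg _) two_ne_zero]
  rw [hrhs, ← hnorm]
  exact log_one_sub_exp_neg_le_tangent hx hy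

/-- Convex upper bound (26): for nonzero `w, w̃ ∈ ℂ^M` and `Φ > 0`,
`log(1 − e^{−Φ‖w‖²}) ≤ Φ·e^{−Φ‖w̃‖²}·‖w‖²/(1 − e^{−Φ‖w̃‖²}) + φ(w̃)`, where
`φ(w̃) = −Φ·e^{−Φ‖w̃‖²}·‖w̃‖²/(1 − e^{−Φ‖w̃‖²}) + log(1 − e^{−Φ‖w̃‖²})`;
equality holds iff `‖w‖ = ‖w̃‖`. -/
theorem stmt_7 (M : ℕ) (hM : 0 < M) (Φ : ℝ) (hΦ : 0 < Φ)
    (w wt : EuclideanSpace ℂ (Fin M)) (hw : w ≠ 0) (hwt : wt ≠ 0) :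
    Real.log (1 - Real.exp (-(Φ * ‖w‖ ^ 2))) ≤
        Φ * Real.exp (-(Φ * ‖wt‖ ^ 2)) * ‖w‖ ^ 2 / (1 - Real.exp (-(Φ * ‖wt‖ ^ 2))) +
          (-(Φ * Real.exp (-(Φ * ‖wt‖ ^ 2)) * ‖wt‖ ^ 2 / (1 - Real.exp (-(Φ * ‖wt‖ ^ 2)))) +
            Real.log (1 - Real.exp (-(Φ * ‖wt‖ ^ 2)))) ∧
      (Real.log (1 - Real.exp (-(Φ * ‖w‖ ^ 2))) =
          Φ * Real.exp (-(Φ * ‖wt‖ ^ 2)) * ‖w‖ ^ 2 / (1 - Real.exp (-(Φ * ‖wt‖ ^ 2))) +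
            (-(Φ * Real.exp (-(Φ * ‖wt‖ ^ 2)) * ‖wt‖ ^ 2 / (1 - Real.exp (-(Φ * ‖wt‖ ^ 2)))) +
              Real.log (1 - Real.exp (-(Φ * ‖wt‖ ^ 2)))) ↔ ‖w‖ = ‖wt‖) :=
  stmt_7_general M Φ hΦ w wt hw hwt
end

section
/- Let n be a positive integer. The function X ↦ log(det X) is concave on the convex set of n×n Hermitian positive definite complex matrices; that is, for Hermitian positive definite X, Y and real t ∈ [0,1], log det(t·X + (1−t)·Y) ≥ t·log det X + (1−t)·log det Y. -/
/-!
Write `X = S²` with `S = X^{1/2}` and `Y = S M S` with `M = S⁻¹ Y S⁻¹` positive definite, with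
eigenvalues `μᵢ > 0`. Then `det (a X + b Y) = det X · ∏ (a + b μᵢ)`, so after taking logarithms the
inequality splits into the scalar inequalities `(1 - t) log μᵢ ≤ log (t + (1 - t) μᵢ)`, which are
instances of the concavity of `log`.
-/

open scoped ComplexOrder MatrixOrder

namespace Matrix
variable {𝕜 ι : Type*} [RCLike 𝕜] [Fintype ι] [DecidableEq ι]

theorem IsHermitian.det_cfc {A : Matrix ι ι 𝕜} (hA : A.IsHermitian) (f : ℝ → ℝ) :
    (cfc f A).det = ∏ i, (f (hA.eigenvalues i) : 𝕜) := by
  rw [hA.cfc_eq, IsHermitian.cfc, Unitary.conjStarAlgAut_apply, det_mul, det_mul,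
    mul_right_comm, ← det_mul, Unitary.mul_star_self_of_mem hA.eigenvectorUnitary.2, det_one,
    one_mul, det_diagonal]
  rfl

theorem IsHermitian.det_smul_one_add_smul {A : Matrix ι ι 𝕜} (hA : A.IsHermitian) (a b : ℝ) :
    (a • 1 + b • A).det = ∏ i, ((a + b * hA.eigenvalues i : ℝ) : 𝕜) := by
  have hA' : IsSelfAdjoint A := hA
  rw [← hA.det_cfc (fun x => a + b * x), cfc_const_add a (b * ·) A, cfc_const_mul_id b A,
    Algebra.algebraMap_eq_smul_one]

theorem PosDef.exists_det_smul_add_smul_eq {X Y : Matrix ι ι 𝕜} (hX : X.PosDef) (hY : Y.PosDef) :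
    ∃ μ : ι → ℝ, (∀ i, 0 < μ i) ∧
      ∀ a b : ℝ, (a • X + b • Y).det = X.det * ∏ i, ((a + b * μ i : ℝ) : 𝕜) := by
  set S := CFC.sqrt X
  have hSS : S * S = X := CFC.sqrt_mul_sqrt_self X hX.posSemidef.nonneg
  have hS : IsUnit S.det := by
    rw [← isUnit_iff_isUnit_det]
    exact isUnit_of_mul_isUnit_left (hSS ▸ hX.isUnit)
  have hSinv : star S⁻¹ = S⁻¹ := by
    rw [star_eq_conjTranspose, conjTranspose_nonsing_inv,
      (nonneg_iff_posSemidef.1 (CFC.sqrt_nonneg X)).1.eq]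
  set M := S⁻¹ * Y * S⁻¹
  have hM : M.PosDef := by
    have hS' : IsUnit S⁻¹ := (isUnit_nonsing_inv_iff).2 ((isUnit_iff_isUnit_det S).2 hS)
    simpa only [M, hSinv] using (IsUnit.posDef_star_left_conjugate_iff hS').2 hY
  have hSMS : S * M * S = Y := by
    simp only [M, ← mul_assoc, mul_nonsing_inv S hS, one_mul]
    rw [mul_assoc, nonsing_inv_mul S hS, mul_one]
  refine ⟨hM.1.eigenvalues, hM.eigenvalues_pos, fun a b => ?_⟩
  calc (a • X + b • Y).det = (S * (a • 1 + b • M) * S).det := by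
        rw [← hSS, ← hSMS]; simp only [mul_add, add_mul, mul_smul_comm, smul_mul_assoc, mul_one]
    _ = X.det * (a • 1 + b • M).det := by rw [det_mul, det_mul, mul_right_comm, ← det_mul, hSS]
    _ = _ := by rw [hM.1.det_smul_one_add_smul]

theorem PosDef.mul_log_re_det_add_mul_log_re_det_le {X Y : Matrix ι ι 𝕜} (hX : X.PosDef)
    (hY : Y.PosDef) {t : ℝ} (ht0 : 0 ≤ t) (ht1 : t ≤ 1) :
    t * Real.log (RCLike.re X.det) + (1 - t) * Real.log (RCLike.re Y.det) ≤
      Real.log (RCLike.re (t • X + (1 - t) • Y).det) := by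
  obtain ⟨μ, hμ, hdet⟩ := hX.exists_det_smul_add_smul_eq hY
  have hre (a b : ℝ) : RCLike.re (a • X + b • Y).det = RCLike.re X.det * ∏ i, (a + b * μ i) := by
    rw [hdet, ← RCLike.ofReal_prod, RCLike.re_mul_ofReal]
  have hYre : RCLike.re Y.det = RCLike.re X.det * ∏ i, μ i := by simpa using hre 0 1
  have hXre : 0 < RCLike.re X.det := (RCLike.pos_iff.1 hX.det_pos).1
  have hconcave (i : ι) :
      0 < t + (1 - t) * μ i ∧ (1 - t) * Real.log (μ i) ≤ Real.log (t + (1 - t) * μ i) := by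
    have h1 : (1 : ℝ) ∈ Set.Ioi 0 := Set.mem_Ioi.2 one_pos
    have hmem := convex_Ioi (0 : ℝ) h1 (hμ i) ht0 (sub_nonneg.2 ht1) (add_sub_cancel t 1)
    have hlog := strictConcaveOn_log_Ioi.concaveOn.2 h1 (hμ i) ht0 (sub_nonneg.2 ht1)
      (add_sub_cancel t 1)
    simp only [smul_eq_mul, mul_one, Real.log_one, mul_zero, zero_add, Set.mem_Ioi] at hmem hlog
    exact ⟨hmem, hlog⟩
  have hsum := Finset.sum_le_sum fun i (_ : i ∈ Finset.univ) => (hconcave i).2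
  rw [← Finset.mul_sum] at hsum
  rw [hre, hYre, Real.log_mul hXre.ne' (Finset.prod_pos fun i _ => (hconcave i).1).ne',
    Real.log_mul hXre.ne' (Finset.prod_pos fun i _ => hμ i).ne',
    Real.log_prod fun i _ => (hconcave i).1.ne', Real.log_prod fun i _ => (hμ i).ne']
  linarith

end Matrix

theorem stmt_8_general (n : ℕ) (X Y : Matrix (Fin n) (Fin n) ℂ)
    (hX : X.PosDef) (hY : Y.PosDef) (t : ℝ) (ht0 : 0 ≤ t) (ht1 : t ≤ 1) :
    Real.log (((t : ℂ) • X + ((1 - t : ℝ) : ℂ) • Y).det.re) ≥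
      t * Real.log (X.det.re) + (1 - t) * Real.log (Y.det.re) := by
  have h := hX.mul_log_re_det_add_mul_log_re_det_le hY ht0 ht1
  simp only [RCLike.real_smul_eq_coe_smul (K := ℂ), RCLike.re_to_complex] at h
  exact h

/-- Concavity of `log det` on Hermitian positive definite complex matrices: for
positive definite `X, Y` and `t ∈ [0,1]`,
`log det(t·X + (1−t)·Y) ≥ t·log det X + (1−t)·log det Y`. -/
theorem stmt_8 (n : ℕ) (hn : 0 < n) (X Y : Matrix (Fin n) (Fin n) ℂ)
    (hX : X.PosDef) (hY : Y.PosDef) (t : ℝ) (ht0 : 0 ≤ t) (ht1 : t ≤ 1) :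
    Real.log (((t : ℂ) • X + ((1 - t : ℝ) : ℂ) • Y).det.re) ≥
      t * Real.log (X.det.re) + (1 - t) * Real.log (Y.det.re) :=
  stmt_8_general n X Y hX hY t ht0 ht1
end

section
/- Let n be a positive integer and let X and X̃ be n×n Hermitian positive definite complex matrices. Then log det X = log det X̃ + Re(tr(X̃⁻¹·(X − X̃))) if and only if X = X̃. (Equality condition of the tangent bound (38).) -/
/-!
Write `X̃ = S * S` with `S = X̃^{1/2}` and put `M = S⁻¹ X S⁻¹`, again positive definite. Then
`log det X - log det X̃ = log det M` and `tr (X̃⁻¹ (X - X̃)) = tr M - n`, so the equation says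
`∑ log μᵢ = ∑ (μᵢ - 1)` for the eigenvalues `μᵢ > 0` of `M`. As `log μ ≤ μ - 1` with equality
only at `μ = 1`, this holds iff `M = 1`, i.e. iff `X = X̃`.
-/

open scoped ComplexOrder

theorem Real.sum_log_eq_sum_sub_one_iff {ι : Type*} {s : Finset ι} {x : ι → ℝ}
    (hx : ∀ i ∈ s, 0 < x i) :
    ∑ i ∈ s, Real.log (x i) = ∑ i ∈ s, (x i - 1) ↔ ∀ i ∈ s, x i = 1 := by
  rw [Finset.sum_eq_sum_iff_of_le fun i hi => Real.log_le_sub_one_of_pos (hx i hi)]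
  refine forall₂_congr fun i hi => ⟨fun h => ?_, fun h => by simp [h]⟩
  by_contra hne
  exact (Real.log_lt_sub_one_of_pos (hx i hi) hne).ne h

theorem Real.log_re_mul_of_pos {z w : ℂ} (hz : 0 < z) (hw : 0 < w) :
    Real.log (z * w).re = Real.log z.re + Real.log w.re := by
  obtain ⟨hz, hz'⟩ := Complex.pos_iff.mp hz
  obtain ⟨hw, hw'⟩ := Complex.pos_iff.mp hw
  rw [Complex.mul_re, ← hz', ← hw', mul_zero, sub_zero, Real.log_mul hz.ne' hw.ne']

namespace Matrix

variable {n : Type*} [Fintype n] [DecidableEq n]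

theorem IsHermitian.eq_one_of_eigenvalues_eq_one {𝕜 : Type*} [RCLike 𝕜] {A : Matrix n n 𝕜}
    (hA : A.IsHermitian) (h : ∀ i, hA.eigenvalues i = 1) : A = 1 := by
  rw [hA.spectral_theorem, show hA.eigenvalues = 1 from funext h]
  simp

theorem PosDef.log_det_re_eq_trace_re_sub_card_iff {A : Matrix n n ℂ} (hA : A.PosDef) :
    Real.log A.det.re = A.trace.re - Fintype.card n ↔ A = 1 := by
  refine ⟨fun h => hA.isHermitian.eq_one_of_eigenvalues_eq_one fun i => ?_, by rintro rfl; simp⟩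
  have hpos : ∀ i ∈ Finset.univ, 0 < hA.isHermitian.eigenvalues i :=
    fun i _ => hA.eigenvalues_pos i
  rw [hA.isHermitian.det_eq_prod_eigenvalues, hA.isHermitian.trace_eq_sum_eigenvalues,
    RCLike.ofReal_eq_complex_ofReal, ← Complex.ofReal_prod, ← Complex.ofReal_sum,
    Complex.ofReal_re, Complex.ofReal_re, Real.log_prod fun i hi => (hpos i hi).ne'] at h
  refine (Real.sum_log_eq_sum_sub_one_iff hpos).1 ?_ i (Finset.mem_univ i)
  rwa [Finset.sum_sub_distrib, Finset.sum_const, Finset.card_univ, nsmul_one]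

theorem PosDef.exists_isUnit_isHermitian_mul_self_eq {𝕜 : Type*} [RCLike 𝕜] {A : Matrix n n 𝕜}
    (hA : A.PosDef) : ∃ S : Matrix n n 𝕜, IsUnit S ∧ S.IsHermitian ∧ S * S = A := by
  open scoped MatrixOrder in
  exact ⟨CFC.sqrt A,
    CFC.isUnit_sqrt_iff_isStrictlyPositive.mpr (isStrictlyPositive_iff_posDef.mpr hA),
    (nonneg_iff_posSemidef.mp (CFC.sqrt_nonneg A)).isHermitian,
    CFC.sqrt_mul_sqrt_self A (nonneg_iff_posSemidef.mpr hA.posSemidef)⟩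

variable {R : Type*} [CommRing R] {S X : Matrix n n R}

theorem trace_mul_self_inv_mul_sub (hS : IsUnit S) :
    ((S * S)⁻¹ * (X - S * S)).trace = (S⁻¹ * X * S⁻¹).trace - Fintype.card n := by
  rw [Matrix.mul_sub, trace_sub, nonsing_inv_mul _ ((isUnit_iff_isUnit_det _).mp (hS.mul hS)),
    trace_one, mul_inv_rev, Matrix.mul_assoc, trace_mul_comm, Matrix.mul_assoc]

theorem det_inv_mul_mul_inv_mul_det_mul_self (hS : IsUnit S) :
    (S⁻¹ * X * S⁻¹).det * (S * S).det = X.det := by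
  have h := Ring.inverse_mul_cancel _ ((isUnit_iff_isUnit_det S).mp hS)
  simp only [det_mul, det_nonsing_inv]
  linear_combination X.det * (Ring.inverse S.det * S.det + 1) * h

theorem inv_mul_mul_inv_eq_one_iff (hS : IsUnit S) : S⁻¹ * X * S⁻¹ = 1 ↔ X = S * S := by
  have hdet := (isUnit_iff_isUnit_det S).mp hS
  refine ⟨fun h => ?_, fun h => ?_⟩
  · calc X = S * (S⁻¹ * X * S⁻¹ * S) := by
          rw [nonsing_inv_mul_cancel_right _ _ hdet, mul_nonsing_inv_cancel_left _ _ hdet]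
      _ = S * S := by rw [h, Matrix.one_mul]
  · rw [h, nonsing_inv_mul_cancel_left _ _ hdet, mul_nonsing_inv _ hdet]

end Matrix

theorem stmt_10_general (n : ℕ) (X Xt : Matrix (Fin n) (Fin n) ℂ)
    (hX : X.PosDef) (hXt : Xt.PosDef) :
    Real.log (X.det.re) = Real.log (Xt.det.re) + ((Xt⁻¹ * (X - Xt)).trace).re ↔ X = Xt := by
  obtain ⟨S, hS, hSH, rfl⟩ := hXt.exists_isUnit_isHermitian_mul_self_eq
  have hM : (S⁻¹ * X * S⁻¹).PosDef := by
    have := (Matrix.IsUnit.posDef_star_left_conjugate_iff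
      (Matrix.isUnit_nonsing_inv_iff.mpr hS)).mpr hX
    rwa [Matrix.star_eq_conjTranspose, hSH.inv.eq] at this
  rw [← Matrix.det_inv_mul_mul_inv_mul_det_mul_self hS,
    Real.log_re_mul_of_pos hM.det_pos hXt.det_pos, Matrix.trace_mul_self_inv_mul_sub hS,
    ← Matrix.inv_mul_mul_inv_eq_one_iff hS, ← hM.log_det_re_eq_trace_re_sub_card_iff]
  simp only [Complex.sub_re, Complex.natCast_re, Fintype.card_fin]
  constructor <;> intro h <;> linarith

/-- Equality condition of the tangent bound (38): for Hermitian positive definite `X, X̃`,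
`log det X = log det X̃ + Re(tr(X̃⁻¹·(X − X̃)))` iff `X = X̃`. -/
theorem stmt_10 (n : ℕ) (hn : 0 < n) (X Xt : Matrix (Fin n) (Fin n) ℂ)
    (hX : X.PosDef) (hXt : Xt.PosDef) :
    Real.log (X.det.re) = Real.log (Xt.det.re) + ((Xt⁻¹ * (X - Xt)).trace).re ↔ X = Xt :=
  stmt_10_general n X Xt hX hXt
end
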